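/- Let $n,k,t$ be positive integers with $k\ge2$ and $n\ge t+2$, and set $r=t+2$, so $p:=\min\{r+1,n\}$. If $n\ge t+3$ (so $p=t+3$), then $|\mathcal{H}_1(n,t+2,k,t+3,t)|=3(n-t-1)k+t-3$. -/

import Mathlib

open Finset

attribute [local instance] Classical.propDecidable

/-- The ground set `[n] × [k]`. -/
def box (n k : ℕ) : Finset (ℕ × ℕ) := Finset.Icc 1 n ×ˢ Finset.Icc 1 k

/-- A `k`-signed set on `[n]`: a subset of `[n] × [k]` with pairwise distinct first coordinates. -/
def IsSigned (n k : ℕ) (T : Finset (ℕ × ℕ)) : Prop :=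
  T ⊆ box n k ∧ (T.image Prod.fst).card = T.card

/-- `L n r k`: the collection of `k`-signed `r`-sets on `[n]`. -/
def L (n r k : ℕ) : Finset (Finset (ℕ × ℕ)) :=
  (box n k).powerset.filter (fun F => F.card = r ∧ (F.image Prod.fst).card = r)

/-- A family is `t`-intersecting if any two members meet in at least `t` elements. -/
def IsTIntersecting (t : ℕ) (F : Finset (Finset (ℕ × ℕ))) : Prop :=
  ∀ A ∈ F, ∀ B ∈ F, t ≤ (A ∩ B).card

/-- `T` is a `t`-cover of the family `F`: a `k`-signed set meeting every member in ≥ `t` points. -/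
def IsTCover (n k t : ℕ) (F : Finset (Finset (ℕ × ℕ))) (T : Finset (ℕ × ℕ)) : Prop :=
  IsSigned n k T ∧ ∀ A ∈ F, t ≤ (T ∩ A).card

/-- `F` is a maximal `t`-intersecting subfamily of `L n r k`. -/
def IsMaximalTIntersecting (n r k t : ℕ) (F : Finset (Finset (ℕ × ℕ))) : Prop :=
  F ⊆ L n r k ∧ IsTIntersecting t F ∧
    ∀ G ⊆ L n r k, IsTIntersecting t G → F ⊆ G → G = F

/-- A `t`-intersecting family is trivial if all members contain a fixed `k`-signed `t`-set. -/
def IsTrivial (n k t : ℕ) (F : Finset (Finset (ℕ × ℕ))) : Prop :=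
  ∃ T, IsSigned n k T ∧ T.card = t ∧ ∀ A ∈ F, T ⊆ A

/-- `Msig d = {(1,1),(2,1),…,(d,1)}`. -/
def Msig (d : ℕ) : Finset (ℕ × ℕ) := (Finset.Icc 1 d).image (fun x => (x, 1))

/-- The family `H₁(n,r,k,ℓ,t)`. -/
def H1 (n r k l t : ℕ) : Finset (Finset (ℕ × ℕ)) :=
  (L n r k).filter (fun F =>
    (Msig t ⊆ F ∧ t + 1 ≤ (F ∩ Msig l).card) ∨
    (¬ Msig t ⊆ F ∧ (F ∩ Msig l).card = l - 1))

/-- The family `H₂(n,r,k,c,t)`. -/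
def H2 (n r k c t : ℕ) : Finset (Finset (ℕ × ℕ)) :=
  (L n r k).filter (fun F =>
    (Msig t ⊆ F ∧ t + 1 ≤ (F ∩ Msig r).card) ∨
    (F ∩ Msig r = Msig t ∧ Msig c \ Msig r ⊆ F) ∨
    (¬ Msig t ⊆ F ∧ (F ∩ Msig r).card = r - 1 ∧ (F ∩ (Msig c \ Msig r)).card = 1))

/-- The set of all `t`-covers of `F` of size `t+1`. -/
noncomputable def TauSet (n k t : ℕ) (F : Finset (Finset (ℕ × ℕ))) : Finset (Finset (ℕ × ℕ)) :=
  (box n k).powerset.filter (fun T => IsTCover n k t F T ∧ T.card = t + 1)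

/-! A member `F` of `H₁(n, t+2, k, t+3, t)` meets `M_{t+3}` in `t+2` or `t+1` points. In the first
case `F` is one of the `t+3` subsets of `M_{t+3}` of size `t+2`. In the second case `M_t ⊆ F`, so
`F = M_t ∪ {(a,1), p}` with `t < a ≤ t+3` and `p` a point of `[n] × [k]` outside `M_{t+3}` whose
first coordinate exceeds `t` and differs from `a`; `a` and `p` are recovered from `F` as the unique
points of `F ∩ M_{t+3} \ M_t` and of `F \ M_{t+3}`. For each `a` there are `(n-t-3)k + 2(k-1)`
such `p`, so `|H₁| = (t+3) + 3((n-t-3)k + 2(k-1))`. -/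

section

variable {n k r t d a b : ℕ} {p q : ℕ × ℕ}

lemma mem_Msig : p ∈ Msig d ↔ 1 ≤ p.1 ∧ p.1 ≤ d ∧ p.2 = 1 := by
  obtain ⟨x, y⟩ := p
  simp only [Msig, mem_image, mem_Icc, Prod.mk.injEq]
  constructor
  · rintro ⟨x, hx, rfl, rfl⟩
    exact ⟨hx.1, hx.2, rfl⟩
  · rintro ⟨h1, h2, rfl⟩
    exact ⟨x, ⟨h1, h2⟩, rfl, rfl⟩

lemma card_Msig (d : ℕ) : #(Msig d) = d := by
  rw [Msig, card_image_of_injective _ fun _ _ h => (Prod.mk.inj h).1, Nat.card_Icc,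
    Nat.add_sub_cancel]

lemma Msig_mono (h : t ≤ d) : Msig t ⊆ Msig d := fun p hp => by
  rw [mem_Msig] at hp ⊢
  omega

lemma Msig_subset_box (hd : d ≤ n) (hk : 1 ≤ k) : Msig d ⊆ box n k := fun p hp => by
  rw [mem_Msig] at hp
  simp only [_root_.box, mem_product, mem_Icc]
  omega

lemma injOn_fst_Msig (d : ℕ) : Set.InjOn Prod.fst (Msig d : Set (ℕ × ℕ)) :=
  fun _ hp _ hq h => Prod.ext h ((mem_Msig.1 hp).2.2.trans (mem_Msig.1 hq).2.2.symm)

lemma mem_L_iff {F : Finset (ℕ × ℕ)} :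
    F ∈ L n r k ↔ F ⊆ box n k ∧ #F = r ∧ Set.InjOn Prod.fst (F : Set (ℕ × ℕ)) := by
  simp only [L, mem_filter, mem_powerset, ← card_image_iff]
  constructor
  · rintro ⟨hF, hc, hi⟩
    exact ⟨hF, hc, hi.trans hc.symm⟩
  · rintro ⟨hF, hc, hi⟩
    exact ⟨hF, hc, hi.trans hc⟩

lemma filter_L_subset_Msig (hd : d ≤ n) (hk : 1 ≤ k) :
    (L n r k).filter (· ⊆ Msig d) = (Msig d).powersetCard r := by
  ext F
  simp only [mem_filter, mem_L_iff, mem_powersetCard]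
  constructor
  · rintro ⟨⟨-, hc, -⟩, hF⟩
    exact ⟨hF, hc⟩
  · rintro ⟨hF, hc⟩
    exact ⟨⟨hF.trans (Msig_subset_box hd hk), hc, (injOn_fst_Msig d).mono hF⟩, hF⟩

def augmentPoints (n k t d a : ℕ) : Finset (ℕ × ℕ) :=
  (box n k).filter fun p => t < p.1 ∧ p.1 ≠ a ∧ p ∉ Msig d

def augmentMsig (t a : ℕ) (p : ℕ × ℕ) : Finset (ℕ × ℕ) := insert (a, 1) (insert p (Msig t))

lemma card_augmentPoints (hta : t < a) (had : a ≤ d) (hdn : d ≤ n) :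
    #(augmentPoints n k t d a) = (n - d) * k + (d - t - 1) * (k - 1) := by
  have hsplit : augmentPoints n k t d a =
      (Icc (d + 1) n ×ˢ Icc 1 k) ∪ ((Ioc t d).erase a ×ˢ Icc 2 k) := by
    ext ⟨x, y⟩
    simp only [augmentPoints, _root_.box, mem_filter, mem_product, mem_Icc, mem_union, mem_erase,
      mem_Ioc, mem_Msig]
    omega
  have hdisj : Disjoint (Icc (d + 1) n ×ˢ Icc 1 k) ((Ioc t d).erase a ×ˢ Icc 2 k) :=
    disjoint_product.2 (Or.inl (disjoint_left.2 fun x hx hx' => by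
      simp only [mem_Icc, mem_erase, mem_Ioc] at hx hx'
      omega))
  rw [hsplit, card_union_of_disjoint hdisj, card_product, card_product, Nat.card_Icc,
    Nat.card_Icc, card_erase_of_mem (mem_Ioc.2 ⟨hta, had⟩), Nat.card_Ioc, Nat.card_Icc]
  congr 2
  omega

lemma augmentMsig_inter_Msig (ha : a ∈ Ioc t d) (hp : p ∈ augmentPoints n k t d a) :
    augmentMsig t a p ∩ Msig d = insert (a, 1) (Msig t) := by
  rw [mem_Ioc] at ha
  rw [augmentMsig, insert_inter_of_mem (mem_Msig.2 ⟨by omega, ha.2, rfl⟩),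
    insert_inter_of_notMem (mem_filter.1 hp).2.2.2, inter_eq_left.2 (Msig_mono (by omega))]

lemma augmentMsig_sdiff_Msig (ha : a ∈ Ioc t d) (hp : p ∈ augmentPoints n k t d a) :
    augmentMsig t a p \ Msig d = {p} := by
  rw [mem_Ioc] at ha
  rw [augmentMsig, insert_sdiff_of_mem _ (mem_Msig.2 ⟨by omega, ha.2, rfl⟩),
    insert_sdiff_of_notMem _ (mem_filter.1 hp).2.2.2,
    sdiff_eq_empty_iff_subset.2 (Msig_mono (by omega)), insert_empty]

lemma augmentMsig_inj (ha : a ∈ Ioc t d) (hb : b ∈ Ioc t d) (hp : p ∈ augmentPoints n k t d a)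
    (hq : q ∈ augmentPoints n k t d b) (h : augmentMsig t a p = augmentMsig t b q) :
    a = b ∧ p = q := by
  have hinter := congrArg (· ∩ Msig d) h
  have hsdiff := congrArg (· \ Msig d) h
  simp only [augmentMsig_inter_Msig ha hp, augmentMsig_inter_Msig hb hq,
    augmentMsig_sdiff_Msig ha hp, augmentMsig_sdiff_Msig hb hq, singleton_inj] at hinter hsdiff
  refine ⟨?_, hsdiff⟩
  have : (a, 1) ∈ insert (b, 1) (Msig t) := hinter ▸ mem_insert_self _ _
  rcases mem_insert.1 this with h | h
  · exact (Prod.mk.inj h).1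
  · exact absurd (mem_Msig.1 h).2.1 (mem_Ioc.1 ha).1.not_ge

lemma augmentMsig_mem_L (hk : 1 ≤ k) (hdn : d ≤ n) (ha : a ∈ Ioc t d)
    (hp : p ∈ augmentPoints n k t d a) : augmentMsig t a p ∈ L n (t + 2) k := by
  rw [mem_Ioc] at ha
  obtain ⟨hpbox, htp, hpa, hpd⟩ := mem_filter.1 hp
  have hpt : p ∉ Msig t := fun h => by rw [mem_Msig] at h; omega
  have hat : (a, 1) ∉ insert p (Msig t) := by
    rw [mem_insert, mem_Msig]
    rintro (rfl | h)
    · exact hpa rfl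
    · omega
  refine mem_L_iff.2 ⟨?_, ?_, ?_⟩
  · refine insert_subset ?_ (insert_subset hpbox (Msig_subset_box (by omega) hk))
    simp only [_root_.box, mem_product, mem_Icc]
    omega
  · rw [augmentMsig, card_insert_of_notMem hat, card_insert_of_notMem hpt, card_Msig]
  · rw [augmentMsig, coe_insert, coe_insert, Set.injOn_insert (by rwa [← coe_insert, mem_coe]),
      Set.injOn_insert (mem_coe.not.2 hpt)]
    refine ⟨⟨injOn_fst_Msig t, ?_⟩, ?_⟩
    · rintro ⟨q, hq, hqp⟩
      rw [mem_coe, mem_Msig] at hq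
      omega
    · rintro ⟨q, hq | hq, hqa⟩
      · exact hpa (hq ▸ hqa)
      · rw [mem_coe, mem_Msig] at hq
        omega

lemma Finset.eq_insert_insert_of_sdiff_eq_singleton {α : Type*} [DecidableEq α]
    {S M F : Finset α} {e p : α} (hSM : S ⊆ M) (hSF : S ⊆ F) (he : (F ∩ M) \ S = {e})
    (hp : F \ M = {p}) : F = insert e (insert p S) := by
  ext x
  have hex := congrArg (x ∈ ·) he
  have hpx := congrArg (x ∈ ·) hp
  have := @hSM x
  have := @hSF x
  simp only [mem_sdiff, mem_inter, mem_singleton, eq_iff_iff] at hex hpx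
  simp only [mem_insert]
  tauto

lemma exists_eq_augmentMsig {F : Finset (ℕ × ℕ)} (hF : F ∈ L n (t + 2) k) (htd : t ≤ d)
    (hMt : Msig t ⊆ F) (hc : #(F ∩ Msig d) = t + 1) :
    ∃ a ∈ Ioc t d, ∃ p ∈ augmentPoints n k t d a, F = augmentMsig t a p := by
  obtain ⟨hbox, hcard, hinj⟩ := mem_L_iff.1 hF
  have hMt' : Msig t ⊆ F ∩ Msig d := subset_inter hMt (Msig_mono htd)
  obtain ⟨e, he⟩ : ∃ e, (F ∩ Msig d) \ Msig t = {e} := card_eq_one.1 <| by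
    rw [card_sdiff_of_subset hMt', hc, card_Msig]
    omega
  obtain ⟨p, hp⟩ : ∃ p, F \ Msig d = {p} := card_eq_one.1 <| by
    have := card_inter_add_card_sdiff F (Msig d)
    omega
  have heF : e ∈ (F ∩ Msig d) \ Msig t := he ▸ mem_singleton_self e
  have hpF : p ∈ F \ Msig d := hp ▸ mem_singleton_self p
  simp only [mem_sdiff, mem_inter] at heF hpF
  obtain ⟨⟨heF, heMd⟩, heMt⟩ := heF
  obtain ⟨hpF, hpMd⟩ := hpF
  obtain ⟨a, b⟩ := e
  obtain ⟨ha1, had, rfl⟩ := mem_Msig.1 heMd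
  have hta : t < a := by
    by_contra h
    exact heMt (mem_Msig.2 ⟨ha1, by omega, rfl⟩)
  refine ⟨a, mem_Ioc.2 ⟨hta, had⟩, p, mem_filter.2 ⟨hbox hpF, ?_, ?_, hpMd⟩,
    eq_insert_insert_of_sdiff_eq_singleton (Msig_mono htd) hMt he hp⟩
  · by_contra h
    have hp1 : 1 ≤ p.1 := (mem_Icc.1 (mem_product.1 (hbox hpF)).1).1
    have hpt : (p.1, 1) ∈ Msig t := mem_Msig.2 ⟨hp1, by omega, rfl⟩
    exact hpMd (hinj hpF (hMt hpt) rfl ▸ Msig_mono htd hpt)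
  · intro h
    exact hpMd (hinj hpF heF h ▸ heMd)

def augmentedFamily (n k t d : ℕ) : Finset (Finset (ℕ × ℕ)) :=
  (L n (t + 2) k).filter (fun F => Msig t ⊆ F ∧ #(F ∩ Msig d) = t + 1)

lemma augmentedFamily_eq_biUnion (hk : 1 ≤ k) (hdn : d ≤ n) (htd : t ≤ d) :
    augmentedFamily n k t d =
      (Ioc t d).biUnion fun a => (augmentPoints n k t d a).image (augmentMsig t a) := by
  ext F
  simp only [augmentedFamily, mem_filter, mem_biUnion, mem_image]
  constructor
  · rintro ⟨hF, hMt, hc⟩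
    obtain ⟨a, ha, p, hp, rfl⟩ := exists_eq_augmentMsig hF htd hMt hc
    exact ⟨a, ha, p, hp, rfl⟩
  · rintro ⟨a, ha, p, hp, rfl⟩
    refine ⟨augmentMsig_mem_L hk hdn ha hp, (subset_insert _ _).trans (subset_insert _ _), ?_⟩
    have hat : (a, 1) ∉ Msig t := fun h => (mem_Ioc.1 ha).1.not_ge (mem_Msig.1 h).2.1
    rw [augmentMsig_inter_Msig ha hp, card_insert_of_notMem hat, card_Msig]

lemma card_augmentedFamily (hk : 1 ≤ k) (hdn : d ≤ n) (htd : t ≤ d) :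
    #(augmentedFamily n k t d) =
      (d - t) * ((n - d) * k + (d - t - 1) * (k - 1)) := by
  rw [augmentedFamily_eq_biUnion hk hdn htd, card_biUnion]
  · rw [sum_congr rfl fun a ha => ?_, sum_const, Nat.card_Ioc, smul_eq_mul]
    rw [card_image_of_injOn fun p hp q hq h => (augmentMsig_inj ha ha hp hq h).2,
      card_augmentPoints (mem_Ioc.1 ha).1 (mem_Ioc.1 ha).2 hdn]
  · intro a ha b hb hab
    refine disjoint_left.2 fun F hFa hFb => hab ?_
    obtain ⟨p, hp, rfl⟩ := mem_image.1 hFa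
    obtain ⟨q, hq, hqp⟩ := mem_image.1 hFb
    exact (augmentMsig_inj hb ha hq hp hqp).1.symm

lemma H1_eq_union :
    H1 n (t + 2) k (t + 3) t = (L n (t + 2) k).filter (· ⊆ Msig (t + 3)) ∪
      augmentedFamily n k t (t + 3) := by
  rw [H1, augmentedFamily, ← filter_or]
  refine filter_congr fun F hF => ?_
  have hcard := (mem_L_iff.1 hF).2.1
  have hle : #(F ∩ Msig (t + 3)) ≤ t + 2 := hcard ▸ card_le_card inter_subset_left
  have hsub : F ⊆ Msig (t + 3) ↔ #(F ∩ Msig (t + 3)) = t + 2 :=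
    inter_eq_left.symm.trans ⟨fun h => by rw [h, hcard],
      fun h => eq_of_subset_of_card_le inter_subset_left (by omega)⟩
  by_cases hMt : Msig t ⊆ F
  all_goals
    simp only [hMt, hsub, true_and, false_and, not_true, not_false_iff, or_false, false_or]
    constructor <;> intro <;> omega

lemma disjoint_filter_subset_Msig_augmentedFamily :
    Disjoint ((L n (t + 2) k).filter (· ⊆ Msig (t + 3)))
      (augmentedFamily n k t (t + 3)) := by
  refine disjoint_filter.2 fun F hF hsub ⟨_, hc⟩ => ?_
  rw [inter_eq_left.2 hsub, (mem_L_iff.1 hF).2.1] at hc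
  omega

end

theorem H1_card_special_general (n k t : ℕ)
    (hk : 2 ≤ k) (hnt : t + 3 ≤ n) :
    ((H1 n (t + 2) k (t + 3) t).card : ℤ) = 3 * ((n : ℤ) - t - 1) * k + t - 3 := by
  rw [H1_eq_union, card_union_of_disjoint disjoint_filter_subset_Msig_augmentedFamily,
    filter_L_subset_Msig hnt (by omega), card_powersetCard, card_Msig, Nat.choose_succ_self_right,
    card_augmentedFamily (by omega) hnt (by omega)]
  rw [Nat.add_sub_cancel_left]
  push_cast [Nat.cast_sub hnt, Nat.cast_sub (by omega : 1 ≤ k)]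
  ring

theorem H1_card_special (n k t : ℕ) (hn : 0 < n) (ht : 0 < t)
    (hk : 2 ≤ k) (hnt : t + 3 ≤ n) :
    ((H1 n (t + 2) k (t + 3) t).card : ℤ) = 3 * ((n : ℤ) - t - 1) * k + t - 3 :=
  H1_card_special_general n k t hk hnt
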